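/- arXiv:1710.04542 — 7 statements merged into one kernel-verified Lean document; each statement's English description precedes it below -/
import Mathlib

section
/- The Lie algebras g₁ and g₂ are not isomorphic as real Lie algebras. -/
/-- The bracket of `g₁`: `[a₁,a₂] = -b`, `[a₁,b] = -c`, `[a₁,c] = -d`. -/
def bracket1 (u v : Fin 5 → ℝ) : Fin 5 → ℝ :=
  ![0, 0,
    -(u 0 * v 1 - u 1 * v 0),
    -(u 0 * v 2 - u 2 * v 0),
    -(u 0 * v 3 - u 3 * v 0)]

/-- The bracket of `g₂`: `[a₁,a₂] = -b`, `[a₁,b] = -c`, `[a₁,c] = -d`, `[a₂,b] = -d`. -/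
def bracket2 (u v : Fin 5 → ℝ) : Fin 5 → ℝ :=
  ![0, 0,
    -(u 0 * v 1 - u 1 * v 0),
    -(u 0 * v 2 - u 2 * v 0),
    -(u 0 * v 3 - u 3 * v 0) - (u 1 * v 2 - u 2 * v 1)]

/-!
In `g₁` the hyperplane `span(a₂, b, c, d)` is an abelian ideal containing `[g₁, g₁]`, so each of
its elements commutes with every bracket. An isomorphism `g₁ ≃ g₂` would therefore map this
hyperplane into the centralizer of `b = [a₂, a₁]` in `g₂`, which is `span(b, c, d)` since
`[x, b] = -(x 0) c - (x 1) d` (coordinates with respect to `a₁, a₂, b, c, d`). A linear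
automorphism cannot map a hyperplane into a subspace of codimension two.
-/

theorem LinearMap.apply_eq_mul_of_forall_apply_eq_zero {R ι : Type*} [CommRing R] [DecidableEq ι]
    (φ : (ι → R) →ₗ[R] R) (i : ι) (hφ : ∀ x : ι → R, x i = 0 → φ x = 0) (x : ι → R) :
    φ x = x i * φ (Pi.single i 1) := by
  have hx : x = x i • Pi.single i 1 + (x - x i • Pi.single i 1) := by abel
  have hrest : φ (x - x i • Pi.single i 1) = 0 := hφ _ (by simp)
  rw [congrArg φ hx, map_add, hrest, map_smul, add_zero, smul_eq_mul]

theorem LinearEquiv.not_mapsTo_setOf_apply_eq_zero {R ι κ : Type*} [CommRing R] [Nontrivial R]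
    [DecidableEq ι] [DecidableEq κ] (e : (ι → R) ≃ₗ[R] (κ → R)) (i : ι) {j k : κ} (hjk : j ≠ k) :
    ¬ Set.MapsTo e {x | x i = 0} {y | y j = 0 ∧ y k = 0} := by
  intro he
  have hcoord (l : κ) (hl : ∀ x : ι → R, x i = 0 → e x l = 0) (y : κ → R) :
      y l = e.symm y i * e (Pi.single i 1) l := by
    simpa using (LinearMap.proj l ∘ₗ e.toLinearMap).apply_eq_mul_of_forall_apply_eq_zero i hl
      (e.symm y)
  have hj := hcoord j fun x hx => (he hx).1
  have hk := hcoord k fun x hx => (he hx).2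
  have h₁ := hj (Pi.single j 1)
  have h₂ := hj (Pi.single k 1)
  have h₃ := hk (Pi.single k 1)
  simp only [Pi.single_eq_same, Pi.single_eq_of_ne hjk] at h₁ h₂ h₃
  generalize e.symm (Pi.single j 1) i = a, e.symm (Pi.single k 1) i = b at *
  generalize e (Pi.single i 1) j = c, e (Pi.single i 1) k = d at *
  -- `a c = 1` makes `c` a unit, so `b c = 0` forces `b = 0`, contradicting `b d = 1`.
  exact one_ne_zero (by linear_combination h₃ + b * d * h₁ - a * d * h₂ : (1 : R) = 0)

theorem bracket1_bracket1_eq_zero {x : Fin 5 → ℝ} (hx : x 0 = 0) (u v : Fin 5 → ℝ) :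
    bracket1 x (bracket1 u v) = 0 := by
  funext k
  fin_cases k <;> simp [bracket1, hx]

theorem bracket2_single_one_single_zero :
    bracket2 (Pi.single 1 1) (Pi.single 0 1) = Pi.single 2 1 := by
  funext k
  fin_cases k <;> simp [bracket2]

theorem apply_zero_eq_zero_and_apply_one_eq_zero_of_bracket2_single_two {x : Fin 5 → ℝ}
    (hx : bracket2 x (Pi.single 2 1) = 0) : x 0 = 0 ∧ x 1 = 0 := by
  simpa [bracket2] using And.intro (congrFun hx 3) (congrFun hx 4)

theorem mapsTo_of_map_bracket1 (e : (Fin 5 → ℝ) ≃ₗ[ℝ] (Fin 5 → ℝ))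
    (he : ∀ u v : Fin 5 → ℝ, e (bracket1 u v) = bracket2 (e u) (e v)) :
    Set.MapsTo e {x | x 0 = 0} {y | y 0 = 0 ∧ y 1 = 0} := by
  intro x hx
  apply apply_zero_eq_zero_and_apply_one_eq_zero_of_bracket2_single_two
  rw [← bracket2_single_one_single_zero, ← e.apply_symm_apply (Pi.single 1 1),
    ← e.apply_symm_apply (Pi.single 0 1), ← he, ← he, bracket1_bracket1_eq_zero hx, map_zero]

/-- the Lie algebras `g₁` and `g₂` are not isomorphic as real Lie algebras,
i.e. no linear equivalence intertwines the two brackets. -/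
theorem stmt2 :
    ¬ ∃ e : (Fin 5 → ℝ) ≃ₗ[ℝ] (Fin 5 → ℝ),
        ∀ u v : Fin 5 → ℝ, e (bracket1 u v) = bracket2 (e u) (e v) := by
  rintro ⟨e, he⟩
  exact e.not_mapsTo_setOf_apply_eq_zero 0 (by decide) (mapsTo_of_map_bracket1 e he)
end

section
/- The Lie algebras g₁ and g₂ have isomorphic associated Carnot graded Lie algebras; more precisely, the associated graded Lie algebra of g₂ (with respect to its lower central series) is isomorphic to g₁. -/
/-- The lower central series of a bracket: `g⁽⁰⁾ = g`, `g⁽ⁱ⁺¹⁾ = [g⁽ⁱ⁾, g]` (as a span). -/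
def lcs {V : Type*} [AddCommGroup V] [Module ℝ V] (B : V → V → V) : ℕ → Submodule ℝ V
  | 0 => ⊤
  | i + 1 => Submodule.span ℝ {z | ∃ u ∈ lcs B i, ∃ v, z = B u v}

/-!
Both brackets raise the Carnot degree (`a₁, a₂ ↦ 0`, `b ↦ 1`, `c ↦ 2`, `d ↦ 3`) by at
least one, and `[·, a₁]` shifts `a₂ ↦ b ↦ c ↦ d` in both algebras; hence both lower central
series are the degree filtration. The extra bracket `[a₂, b] = -d` of `g₂` raises the degree
by two, so the identity map induces the isomorphism `Car(g₂) ≅ g₁`.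
-/

/-- Coordinates `0, …, 4` stand for `a₁, a₂, b, c, d`. -/
def carnotDegree (k : Fin 5) : ℕ := (k : ℕ) - 1

def carnotFiltration (i : ℕ) : Submodule ℝ (Fin 5 → ℝ) :=
  Submodule.pi {k | carnotDegree k < i} fun _ => ⊥

lemma mem_carnotFiltration {i : ℕ} {x : Fin 5 → ℝ} :
    x ∈ carnotFiltration i ↔ ∀ k, carnotDegree k < i → x k = 0 := by
  simp [carnotFiltration, Submodule.mem_pi]

lemma carnotFiltration_zero : carnotFiltration 0 = ⊤ :=
  eq_top_iff.2 fun _ _ => mem_carnotFiltration.2 fun _ h => absurd h (Nat.not_lt_zero _)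

lemma carnotFiltration_antitone : Antitone carnotFiltration := fun _ _ hij _ hx =>
  mem_carnotFiltration.2 fun k hk => mem_carnotFiltration.1 hx k (hk.trans_le hij)

lemma mul_eq_zero_of_carnotDegree_add_lt {i j : ℕ} {u v : Fin 5 → ℝ}
    (hu : u ∈ carnotFiltration i) (hv : v ∈ carnotFiltration j) {a b : Fin 5}
    (h : carnotDegree a + carnotDegree b < i + j) : u a * v b = 0 := by
  rw [mem_carnotFiltration] at hu hv
  rcases lt_or_ge (carnotDegree a) i with ha | ha
  · rw [hu a ha, zero_mul]
  · rw [hv b (by omega), mul_zero]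

lemma bracket1_mem_carnotFiltration {i j : ℕ} {u v : Fin 5 → ℝ}
    (hu : u ∈ carnotFiltration i) (hv : v ∈ carnotFiltration j) :
    bracket1 u v ∈ carnotFiltration (i + j + 1) := by
  refine mem_carnotFiltration.2 fun k hk => ?_
  fin_cases k <;> simp only [carnotDegree] at hk <;>
    simp (disch := simp only [carnotDegree]; omega)
      [bracket1, mul_eq_zero_of_carnotDegree_add_lt hu hv]

lemma bracket2_sub_bracket1_mem_carnotFiltration {i j : ℕ} {u v : Fin 5 → ℝ}
    (hu : u ∈ carnotFiltration i) (hv : v ∈ carnotFiltration j) :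
    bracket2 u v - bracket1 u v ∈ carnotFiltration (i + j + 2) := by
  refine mem_carnotFiltration.2 fun k hk => ?_
  fin_cases k <;> simp only [carnotDegree] at hk <;>
    simp (disch := simp only [carnotDegree]; omega)
      [bracket1, bracket2, mul_eq_zero_of_carnotDegree_add_lt hu hv]

lemma bracket2_mem_carnotFiltration {i j : ℕ} {u v : Fin 5 → ℝ}
    (hu : u ∈ carnotFiltration i) (hv : v ∈ carnotFiltration j) :
    bracket2 u v ∈ carnotFiltration (i + j + 1) := by
  simpa using add_mem (bracket1_mem_carnotFiltration hu hv)
    (carnotFiltration_antitone (by omega) (bracket2_sub_bracket1_mem_carnotFiltration hu hv))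

lemma bracket1_single_zero (u : Fin 5 → ℝ) :
    bracket1 u (Pi.single 0 1) = ![0, 0, u 1, u 2, u 3] := by
  ext k
  fin_cases k <;> simp [bracket1]

lemma bracket2_single_zero (u : Fin 5 → ℝ) :
    bracket2 u (Pi.single 0 1) = ![0, 0, u 1, u 2, u 3] := by
  ext k
  fin_cases k <;> simp [bracket2]

section

variable {B : (Fin 5 → ℝ) → (Fin 5 → ℝ) → Fin 5 → ℝ}
  (hB : ∀ {i j : ℕ} {u v : Fin 5 → ℝ}, u ∈ carnotFiltration i → v ∈ carnotFiltration j →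
    B u v ∈ carnotFiltration (i + j + 1))
  (hshift : ∀ u, B u (Pi.single 0 1) = ![0, 0, u 1, u 2, u 3])
include hB hshift

lemma span_bracket_carnotFiltration (i : ℕ) :
    Submodule.span ℝ {z | ∃ u ∈ carnotFiltration i, ∃ v, z = B u v} =
      carnotFiltration (i + 1) := by
  refine le_antisymm (Submodule.span_le.2 ?_) fun x hx => Submodule.subset_span ?_
  · rintro _ ⟨u, hu, v, rfl⟩
    simpa using hB hu (carnotFiltration_zero ▸ Submodule.mem_top : v ∈ carnotFiltration 0)
  · rw [mem_carnotFiltration] at hx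
    refine ⟨![0, x 2, x 3, x 4, 0], mem_carnotFiltration.2 fun k hk => ?_, Pi.single 0 1, ?_⟩
    · fin_cases k <;>
        first | rfl | exact hx _ (by simp only [carnotDegree] at hk ⊢; omega)
    · rw [hshift]
      ext k
      fin_cases k <;> simp [hx, carnotDegree]

lemma lcs_eq_carnotFiltration (i : ℕ) : lcs B i = carnotFiltration i := by
  induction i with
  | zero => exact carnotFiltration_zero.symm
  | succ i ih => rw [lcs, ih, span_bracket_carnotFiltration hB hshift]

end

/-- the associated Carnot graded Lie algebra of `g₂` is isomorphic to `g₁`: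
there is a linear equivalence carrying the lower central series of `g₂` onto that of `g₁`
and intertwining the brackets up to terms of lower Carnot degree (i.e. modulo
`g₁⁽ⁱ⁺ʲ⁺²⁾` on pieces of filtration degrees `i` and `j`), so that the induced map
`Car(g₂) → Car(g₁) = g₁` is an isomorphism of graded Lie algebras. -/
theorem stmt3 :
    ∃ e : (Fin 5 → ℝ) ≃ₗ[ℝ] (Fin 5 → ℝ),
      (∀ i : ℕ, Submodule.map (e : (Fin 5 → ℝ) →ₗ[ℝ] (Fin 5 → ℝ)) (lcs bracket2 i)
          = lcs bracket1 i) ∧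
      ∀ i j : ℕ, ∀ u ∈ lcs bracket2 i, ∀ v ∈ lcs bracket2 j,
        e (bracket2 u v) - bracket1 (e u) (e v) ∈ lcs bracket1 (i + j + 2) := by
  have h₁ := lcs_eq_carnotFiltration bracket1_mem_carnotFiltration bracket1_single_zero
  have h₂ := lcs_eq_carnotFiltration bracket2_mem_carnotFiltration bracket2_single_zero
  refine ⟨LinearEquiv.refl ℝ _, fun i => by simp [h₁, h₂], fun i j u hu v hv => ?_⟩
  rw [h₂] at hu hv
  rw [h₁]
  exact bracket2_sub_bracket1_mem_carnotFiltration hu hv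
end

section
/- There exists no pair of vectors u, v in g₂ such that [u,v] in the Lie algebra g₂ equals a₁·c-component plus a₂·b-component matching both brackets simultaneously; concretely: there are no real numbers k₁,…,k₅, l₁,…,l₅ satisfying k₁l₂-k₂l₁ = k₁l₃-k₃l₁ = k₁l₅-k₅l₁ = k₂l₃-k₃l₂ = k₂l₄-k₄l₂ = k₃l₄-k₄l₃ = k₃l₅-k₅l₃ = k₄l₅-k₅l₄ = 0 and k₁l₄-k₄l₁ = k₂l₅-k₅l₂ = 1. -/
/-! The 2×2 minors `pᵢⱼ = kᵢlⱼ - kⱼlᵢ` of a 2×n matrix satisfy the Plücker relation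
`p₁₂p₄₅ - p₁₄p₂₅ + p₁₅p₂₄ = 0`; with `p₁₂ = p₁₅ = 0` it forces `p₁₄p₂₅ = 0`, not `1`. -/

theorem plucker_relation_minors {R : Type*} [CommRing R] (a b c d a' b' c' d' : R) :
    (a * b' - b * a') * (c * d' - d * c') - (a * c' - c * a') * (b * d' - d * b')
      + (a * d' - d * a') * (b * c' - c * b') = 0 := by
  ring

/-- there are no reals `k₁,…,k₅, l₁,…,l₅` such that all the listed
2×2 minors vanish while `k₁l₄ - k₄l₁ = k₂l₅ - k₅l₂ = 1`. -/
theorem stmt4 :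
    ¬ ∃ k1 k2 k3 k4 k5 l1 l2 l3 l4 l5 : ℝ,
        k1 * l2 - k2 * l1 = 0 ∧
        k1 * l3 - k3 * l1 = 0 ∧
        k1 * l5 - k5 * l1 = 0 ∧
        k2 * l3 - k3 * l2 = 0 ∧
        k2 * l4 - k4 * l2 = 0 ∧
        k3 * l4 - k4 * l3 = 0 ∧
        k3 * l5 - k5 * l3 = 0 ∧
        k4 * l5 - k5 * l4 = 0 ∧
        k1 * l4 - k4 * l1 = 1 ∧
        k2 * l5 - k5 * l2 = 1 := by
  rintro ⟨k1, k2, -, k4, k5, l1, l2, -, l4, l5, h12, -, h15, -, -, -, -, -, h14, h25⟩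
  have plucker := plucker_relation_minors k1 k2 k4 k5 l1 l2 l4 l5
  rw [h12, h15, h14, h25] at plucker
  norm_num at plucker
end

section
/- In a commutative differential graded algebra ΛV freely generated by degree-1 elements x₁,…,x_{2k}, n₁,…,n_{2k-1}, m with dxᵢ = 0, dnᵢ = xᵢx_{i+1}, and dm = Σᵢ xᵢnᵢ + p where p ∈ Λ²⟨x₁,…,x_{2k}⟩, there is a CDGA isomorphism f to the same algebra with p = 0, given by f(xᵢ)=xᵢ, f(m)=m, and f(nⱼ) = nⱼ - Σ_{i>j} t_{j,i} xᵢ where p = Σ_{j<i} t_{j,i} xⱼxᵢ. In particular f commutes with the differentials. -/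
noncomputable section

/-- Index type for the degree-1 generators `x₁,…,x_{2k}, n₁,…,n_{2k-1}, m`. -/
abbrev Ik (k : ℕ) := Fin (2 * k) ⊕ Fin (2 * k - 1) ⊕ Unit

/-- The free graded-commutative algebra on these degree-1 generators, modelled as the
exterior algebra of `ℝ^{Ik k}`. -/
abbrev Lk (k : ℕ) := ExteriorAlgebra ℝ (Ik k → ℝ)

def X (k : ℕ) (i : Fin (2 * k)) : Lk k := ExteriorAlgebra.ι ℝ (Pi.single (Sum.inl i) 1)

def N (k : ℕ) (j : Fin (2 * k - 1)) : Lk k :=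
  ExteriorAlgebra.ι ℝ (Pi.single (Sum.inr (Sum.inl j)) 1)

def M (k : ℕ) : Lk k := ExteriorAlgebra.ι ℝ (Pi.single (Sum.inr (Sum.inr ())) 1)

def e1 (k : ℕ) (j : Fin (2 * k - 1)) : Fin (2 * k) := ⟨j.1, by have := j.2; omega⟩

def e2 (k : ℕ) (j : Fin (2 * k - 1)) : Fin (2 * k) := ⟨j.1 + 1, by have := j.2; omega⟩

/-! The substitution `nⱼ ↦ nⱼ - Σ_{i>j} t_{j,i} xᵢ` is `1 - u` on generators with `u² = 0`, hence
extends to an algebra automorphism `f` of the exterior algebra. It fixes `dnⱼ = xⱼxⱼ₊₁` because the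
`xᵢ` are closed, and it sends `dm = Σⱼ xⱼnⱼ + p` to `Σⱼ xⱼnⱼ` because `Σⱼ xⱼ Σ_{i>j} t_{j,i} xᵢ = p`.
Since `d` and `d'` are odd derivations, `f ∘ d = d' ∘ f` then follows from its truth on `1` and on
generators, by induction on words. -/

namespace ExteriorAlgebra

variable {R M N B : Type*} [CommRing R] [AddCommGroup M] [Module R M] [AddCommGroup N]
  [Module R N] [Ring B] [Algebra R B]

theorem algHom_intertwines_of_leibniz (f : ExteriorAlgebra R M →ₐ[R] B)
    (d : ExteriorAlgebra R M →ₗ[R] ExteriorAlgebra R M) (d' : B →ₗ[R] B)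
    (hd : ∀ v y, d (ι R v * y) = d (ι R v) * y - ι R v * d y)
    (hd' : ∀ v z, d' (f (ι R v) * z) = d' (f (ι R v)) * z - f (ι R v) * d' z)
    (hone : f (d 1) = d' 1) (hι : ∀ v, f (d (ι R v)) = d' (f (ι R v)))
    (y : ExteriorAlgebra R M) : f (d y) = d' (f y) := by
  induction y using CliffordAlgebra.left_induction with
  | algebraMap r =>
    rw [Algebra.algebraMap_eq_smul_one, map_smul, map_smul, map_smul, map_smul, hone,
      _root_.map_one f]
  | add y z hy hz => rw [map_add, map_add, map_add, hy, hz, map_add]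
  | ι_mul y v hy =>
    change f (d (ι R v * y)) = d' (f (ι R v * y))
    rw [hd, map_mul, hd', map_sub, map_mul, map_mul, hι, hy]

def congr (e : M ≃ₗ[R] N) : ExteriorAlgebra R M ≃ₐ[R] ExteriorAlgebra R N :=
  AlgEquiv.ofAlgHom (map e.toLinearMap) (map e.symm.toLinearMap) (by simp) (by simp)

@[simp]
theorem congr_ι (e : M ≃ₗ[R] N) (v : M) : congr e (ι R v) = ι R (e v) :=
  map_apply_ι _ _

end ExteriorAlgebra

namespace LinearEquiv

variable {R M : Type*} [CommRing R] [AddCommGroup M] [Module R M]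

def oneSubOfMulSelfEqZero (u : Module.End R M) (hu : u * u = 0) : M ≃ₗ[R] M :=
  ofLinearMap (1 - u) (1 + u)
    (by simp [← Module.End.mul_eq_comp, ← Module.End.one_eq_id, sub_mul, mul_add, hu])
    (by simp [← Module.End.mul_eq_comp, ← Module.End.one_eq_id, add_mul, mul_sub, hu])

@[simp]
theorem oneSubOfMulSelfEqZero_apply (u : Module.End R M) (hu : u * u = 0) (v : M) :
    oneSubOfMulSelfEqZero u hu v = v - u v := rfl

end LinearEquiv

section Perturbation

variable (k : ℕ) (t : Fin (2 * k) → Fin (2 * k) → ℝ)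

def correction (j : Fin (2 * k - 1)) : Ik k → ℝ :=
  ∑ i, (if j.1 < i.1 then t (e1 k j) i else 0) • Pi.single (Sum.inl i) 1

def correctionEnd : Module.End ℝ (Ik k → ℝ) :=
  ∑ j, (LinearMap.proj (Sum.inr (Sum.inl j))).smulRight (correction k t j)

theorem correctionEnd_apply (v : Ik k → ℝ) :
    correctionEnd k t v = ∑ j, v (Sum.inr (Sum.inl j)) • correction k t j := by
  simp [correctionEnd]

theorem correction_apply_inr (j : Fin (2 * k - 1)) (b : Fin (2 * k - 1) ⊕ Unit) :
    correction k t j (Sum.inr b) = 0 := by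
  simp [correction, Finset.sum_apply, ite_apply]

theorem correctionEnd_correction (j : Fin (2 * k - 1)) :
    correctionEnd k t (correction k t j) = 0 := by
  simp [correctionEnd_apply, correction_apply_inr]

theorem correctionEnd_mul_self : correctionEnd k t * correctionEnd k t = 0 :=
  LinearMap.ext fun v => by simp [correctionEnd_apply k t v, correctionEnd_correction]

def perturbationEquiv : Lk k ≃ₐ[ℝ] Lk k :=
  ExteriorAlgebra.congr
    (LinearEquiv.oneSubOfMulSelfEqZero (correctionEnd k t) (correctionEnd_mul_self k t))

theorem perturbationEquiv_ι (v : Ik k → ℝ) :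
    perturbationEquiv k t (ExteriorAlgebra.ι ℝ v)
      = ExteriorAlgebra.ι ℝ (v - correctionEnd k t v) := by
  simp [perturbationEquiv]

theorem perturbationEquiv_X (i : Fin (2 * k)) : perturbationEquiv k t (X k i) = X k i := by
  simp [X, perturbationEquiv_ι, correctionEnd_apply]

theorem perturbationEquiv_M : perturbationEquiv k t (M k) = M k := by
  simp [M, perturbationEquiv_ι, correctionEnd_apply]

theorem perturbationEquiv_N (j : Fin (2 * k - 1)) :
    perturbationEquiv k t (N k j) = N k j
      - ∑ i : Fin (2 * k), (if j.1 < i.1 then t (e1 k j) i else 0) • X k i := by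
  simp [N, X, perturbationEquiv_ι, correctionEnd_apply, correction, Pi.single_apply,
    apply_ite (ExteriorAlgebra.ι ℝ)]

theorem sum_X_e1_mul_sum_smul_X :
    ∑ j : Fin (2 * k - 1), X k (e1 k j) *
        ∑ i : Fin (2 * k), (if j.1 < i.1 then t (e1 k j) i else 0) • X k i
      = ∑ a : Fin (2 * k), ∑ b : Fin (2 * k),
          (if a.1 < b.1 then t a b else 0) • (X k a * X k b) := by
  refine Fintype.sum_of_injective (e1 k) (fun j j' h => by simpa [e1, Fin.ext_iff] using h) _ _
    (fun a ha => Finset.sum_eq_zero fun b _ => ?_) (fun j => ?_)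
  · -- `a` is the last index `2k - 1`, so no `b > a` exists
    have hlast : ¬ a.1 < 2 * k - 1 := fun hlt => ha ⟨⟨a.1, hlt⟩, rfl⟩
    rw [if_neg (by omega), zero_smul]
  · simp only [Finset.mul_sum, mul_smul_comm]
    rfl

theorem perturbationEquiv_sum_X_mul_N_add :
    perturbationEquiv k t ((∑ j : Fin (2 * k - 1), X k (e1 k j) * N k j)
        + ∑ a : Fin (2 * k), ∑ b : Fin (2 * k),
            (if a.1 < b.1 then t a b else 0) • (X k a * X k b))
      = ∑ j : Fin (2 * k - 1), X k (e1 k j) * N k j := by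
  simp only [map_add, map_sum, map_mul, map_smul, perturbationEquiv_X, perturbationEquiv_N,
    mul_sub, Finset.sum_sub_distrib, sum_X_e1_mul_sum_smul_X]
  abel

end Perturbation

theorem stmt9_general (k : ℕ) (t : Fin (2 * k) → Fin (2 * k) → ℝ)
    (d d' : Lk k →ₗ[ℝ] Lk k)
    (hleib : ∀ (v : Ik k → ℝ) (y : Lk k),
      d (ExteriorAlgebra.ι ℝ v * y)
        = d (ExteriorAlgebra.ι ℝ v) * y - ExteriorAlgebra.ι ℝ v * d y)
    (hleib' : ∀ (v : Ik k → ℝ) (y : Lk k),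
      d' (ExteriorAlgebra.ι ℝ v * y)
        = d' (ExteriorAlgebra.ι ℝ v) * y - ExteriorAlgebra.ι ℝ v * d' y)
    (hone : d 1 = 0) (hone' : d' 1 = 0)
    (hx : ∀ i, d (X k i) = 0) (hx' : ∀ i, d' (X k i) = 0)
    (hn : ∀ j, d (N k j) = X k (e1 k j) * X k (e2 k j))
    (hn' : ∀ j, d' (N k j) = X k (e1 k j) * X k (e2 k j))
    (hm : d (M k) = (∑ j : Fin (2 * k - 1), X k (e1 k j) * N k j)
        + ∑ a : Fin (2 * k), ∑ b : Fin (2 * k),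
            (if a.1 < b.1 then t a b else 0) • (X k a * X k b))
    (hm' : d' (M k) = ∑ j : Fin (2 * k - 1), X k (e1 k j) * N k j) :
    ∃ f : Lk k ≃ₐ[ℝ] Lk k,
      (∀ i, f (X k i) = X k i) ∧
      f (M k) = M k ∧
      (∀ j : Fin (2 * k - 1),
        f (N k j) = N k j
          - ∑ i : Fin (2 * k), (if j.1 < i.1 then t (e1 k j) i else 0) • X k i) ∧
      ∀ y : Lk k, f (d y) = d' (f y) := by
  let f := perturbationEquiv k t
  refine ⟨f, perturbationEquiv_X k t, perturbationEquiv_M k t, perturbationEquiv_N k t, ?_⟩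
  have hgen : ∀ v, f (d (ExteriorAlgebra.ι ℝ v)) = d' (f (ExteriorAlgebra.ι ℝ v)) := by
    suffices f.toLinearMap ∘ₗ d ∘ₗ ExteriorAlgebra.ι ℝ = d' ∘ₗ f.toLinearMap ∘ₗ ExteriorAlgebra.ι ℝ
      from LinearMap.congr_fun this
    refine (Pi.basisFun ℝ (Ik k)).ext fun b => ?_
    simp only [LinearMap.comp_apply, AlgEquiv.toLinearMap_apply, Pi.basisFun_apply]
    rcases b with i | j | _
    · change f (d (X k i)) = d' (f (X k i))
      rw [hx, map_zero, perturbationEquiv_X, hx']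
    · change f (d (N k j)) = d' (f (N k j))
      rw [hn, map_mul, perturbationEquiv_X, perturbationEquiv_X, perturbationEquiv_N, map_sub, hn',
        map_sum]
      simp only [map_smul, hx', smul_zero, Finset.sum_const_zero, sub_zero]
    · change f (d (M k)) = d' (f (M k))
      rw [hm, perturbationEquiv_sum_X_mul_N_add, perturbationEquiv_M, hm']
  refine ExteriorAlgebra.algHom_intertwines_of_leibniz f.toAlgHom d d' hleib (fun v z => ?_)
    (by simp [hone, hone']) hgen
  change d' (f _ * z) = d' (f _) * z - f _ * d' z
  rw [perturbationEquiv_ι, hleib']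

/-- let `d` be the differential with `dxᵢ = 0`, `dnᵢ = xᵢx_{i+1}` and
`dm = Σᵢ xᵢnᵢ + p` where `p = Σ_{j<i} t_{j,i} xⱼxᵢ ∈ Λ²⟨x₁,…,x_{2k}⟩`, and let `d'` be
the differential of the unperturbed model (`p = 0`).  Then there is a CDGA isomorphism
`f` with `f(xᵢ) = xᵢ`, `f(m) = m`, `f(nⱼ) = nⱼ - Σ_{i>j} t_{j,i} xᵢ`, commuting with the
differentials. -/
theorem stmt9 (k : ℕ) (hk : 1 ≤ k) (t : Fin (2 * k) → Fin (2 * k) → ℝ)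
    (d d' : Lk k →ₗ[ℝ] Lk k)
    (hleib : ∀ (v : Ik k → ℝ) (y : Lk k),
      d (ExteriorAlgebra.ι ℝ v * y)
        = d (ExteriorAlgebra.ι ℝ v) * y - ExteriorAlgebra.ι ℝ v * d y)
    (hleib' : ∀ (v : Ik k → ℝ) (y : Lk k),
      d' (ExteriorAlgebra.ι ℝ v * y)
        = d' (ExteriorAlgebra.ι ℝ v) * y - ExteriorAlgebra.ι ℝ v * d' y)
    (hone : d 1 = 0) (hone' : d' 1 = 0)
    (hx : ∀ i, d (X k i) = 0) (hx' : ∀ i, d' (X k i) = 0)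
    (hn : ∀ j, d (N k j) = X k (e1 k j) * X k (e2 k j))
    (hn' : ∀ j, d' (N k j) = X k (e1 k j) * X k (e2 k j))
    (hm : d (M k) = (∑ j : Fin (2 * k - 1), X k (e1 k j) * N k j)
        + ∑ a : Fin (2 * k), ∑ b : Fin (2 * k),
            (if a.1 < b.1 then t a b else 0) • (X k a * X k b))
    (hm' : d' (M k) = ∑ j : Fin (2 * k - 1), X k (e1 k j) * N k j) :
    ∃ f : Lk k ≃ₐ[ℝ] Lk k,
      (∀ i, f (X k i) = X k i) ∧
      f (M k) = M k ∧
      (∀ j : Fin (2 * k - 1),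
        f (N k j) = N k j
          - ∑ i : Fin (2 * k), (if j.1 < i.1 then t (e1 k j) i else 0) • X k i) ∧
      ∀ y : Lk k, f (d y) = d' (f y) :=
  stmt9_general k t d d' hleib hleib' hone hone' hx hx' hn hn' hm hm'
end
end

section
/- Any Lie algebra structure on span(x₁,…,x_{2k}, n₁,…,n_{2k-1}, m) with [xᵢ,nᵢ] = -m for all 1 ≤ i ≤ 2k-1, [xᵢ,x_{i+1}] = -nᵢ - t_{i,i+1}m for all 1 ≤ i ≤ 2k-1, and [xᵢ,xⱼ] = -t_{i,j}m for j > i+1, with arbitrary coefficients t_{i,j} (so that [xᵢ,xⱼ] ≡ -nᵢδ_{j,i+1} mod span(m)), is isomorphic to the Lie algebra of Theorem B(1) via the change of basis nⱼ ↦ nⱼ - Σ_{i>j} t_{j,i}xᵢ (suitably dualized). -/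
/-- The bracket of Theorem B(1): `[xᵢ, x_{i+1}] = -nᵢ`, `[xᵢ, nᵢ] = -m`. -/
def Bk (k : ℕ) (u v : Ik k → ℝ) : Ik k → ℝ := fun j =>
  match j with
  | Sum.inl _ => 0
  | Sum.inr (Sum.inl i) =>
      -(u (Sum.inl (e1 k i)) * v (Sum.inl (e2 k i))
        - u (Sum.inl (e2 k i)) * v (Sum.inl (e1 k i)))
  | Sum.inr (Sum.inr _) =>
      -(∑ i : Fin (2 * k - 1),
          (u (Sum.inl (e1 k i)) * v (Sum.inr (Sum.inl i))
            - u (Sum.inr (Sum.inl i)) * v (Sum.inl (e1 k i))))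

/-- The perturbed bracket: in addition to the brackets of Theorem B(1), the brackets of
the `x`'s are allowed to hit `m` with arbitrary coefficients `t_{i,j}` (for `i < j`):
`[xᵢ, xⱼ] = -nᵢδ_{j,i+1} - t_{i,j} m`. -/
def Bkt (k : ℕ) (t : Fin (2 * k) → Fin (2 * k) → ℝ) (u v : Ik k → ℝ) : Ik k → ℝ := fun j =>
  match j with
  | Sum.inl _ => 0
  | Sum.inr (Sum.inl i) =>
      -(u (Sum.inl (e1 k i)) * v (Sum.inl (e2 k i))
        - u (Sum.inl (e2 k i)) * v (Sum.inl (e1 k i)))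
  | Sum.inr (Sum.inr _) =>
      -(∑ i : Fin (2 * k - 1),
          (u (Sum.inl (e1 k i)) * v (Sum.inr (Sum.inl i))
            - u (Sum.inr (Sum.inl i)) * v (Sum.inl (e1 k i))))
      - ∑ a : Fin (2 * k), ∑ b : Fin (2 * k),
          (if a.1 < b.1 then
            t a b * (u (Sum.inl a) * v (Sum.inl b) - u (Sum.inl b) * v (Sum.inl a))
          else 0)

/-- The shift `∑_{i > j} t_{j,i} u(xᵢ)` used in the change of basis. -/
def shiftT (k : ℕ) (t : Fin (2 * k) → Fin (2 * k) → ℝ) (u : Ik k → ℝ) (j : Fin (2 * k - 1)) : ℝ :=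
  ∑ i : Fin (2 * k), (if (e1 k j).1 < i.1 then t (e1 k j) i else 0) * u (Sum.inl i)

lemma shiftT_add (k t) (u v : Ik k → ℝ) (j) :
    shiftT k t (u + v) j = shiftT k t u j + shiftT k t v j := by
  simp [shiftT, mul_add, Finset.sum_add_distrib]

lemma shiftT_smul (k t) (c : ℝ) (u : Ik k → ℝ) (j) :
    shiftT k t (c • u) j = c * shiftT k t u j := by
  simp [shiftT, Finset.mul_sum]; congr 1; funext i; ring

/-- Linear map shifting the `n` coordinates by `s` times the shift. -/
def phiT (k : ℕ) (t : Fin (2 * k) → Fin (2 * k) → ℝ) (s : ℝ) :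
    (Ik k → ℝ) →ₗ[ℝ] (Ik k → ℝ) where
  toFun u := fun j => match j with
    | Sum.inl i => u (Sum.inl i)
    | Sum.inr (Sum.inl j) => u (Sum.inr (Sum.inl j)) + s * shiftT k t u j
    | Sum.inr (Sum.inr _) => u (Sum.inr (Sum.inr ()))
  map_add' u v := by
    funext j
    rcases j with i | j | _ <;> simp [shiftT_add] <;> ring
  map_smul' c u := by
    funext j
    rcases j with i | j | _ <;> simp [shiftT_smul] <;> ring

lemma phiT_x (k : ℕ) (t : Fin (2*k) → Fin (2*k) → ℝ) (s : ℝ) (u : Ik k → ℝ) (i : Fin (2*k)) :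
    phiT k t s u (Sum.inl i) = u (Sum.inl i) := rfl
lemma phiT_n (k : ℕ) (t : Fin (2*k) → Fin (2*k) → ℝ) (s : ℝ) (u : Ik k → ℝ) (j : Fin (2*k-1)) :
    phiT k t s u (Sum.inr (Sum.inl j)) = u (Sum.inr (Sum.inl j)) + s * shiftT k t u j := rfl
lemma phiT_m (k : ℕ) (t : Fin (2*k) → Fin (2*k) → ℝ) (s : ℝ) (u : Ik k → ℝ) (z : Unit) :
    phiT k t s u (Sum.inr (Sum.inr z)) = u (Sum.inr (Sum.inr ())) := rfl

lemma shiftT_phiT (k : ℕ) (t : Fin (2*k) → Fin (2*k) → ℝ) (s' : ℝ) (u : Ik k → ℝ) (j : Fin (2*k-1)) :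
    shiftT k t (phiT k t s' u) j = shiftT k t u j := rfl

lemma phiT_comp (k t) (s s' : ℝ) (u : Ik k → ℝ) :
    phiT k t s (phiT k t s' u) = phiT k t (s + s') u := by
  funext j
  rcases j with i | j | z <;>
    simp [phiT_x, phiT_n, phiT_m, shiftT_phiT] <;> ring

lemma phiT_zero (k : ℕ) (t : Fin (2*k) → Fin (2*k) → ℝ) (u : Ik k → ℝ) :
    phiT k t 0 u = u := by
  funext j
  rcases j with i | j | z <;> simp [phiT_x, phiT_n, phiT_m]

lemma key (k : ℕ) (f : Fin (2 * k) → ℝ)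
    (h0 : ∀ a : Fin (2 * k), a.1 = 2 * k - 1 → f a = 0) :
    ∑ j : Fin (2 * k - 1), f (e1 k j) = ∑ a : Fin (2 * k), f a := by
  have hinj : ∀ x ∈ Finset.univ, ∀ y ∈ Finset.univ, e1 k x = e1 k y → x = y := by
    intro x _ y _ h
    have h2 := congrArg Fin.val h
    exact Fin.ext h2
  rw [← Finset.sum_image hinj]
  apply Finset.sum_subset (Finset.subset_univ _)
  intro a _ ha
  apply h0
  by_contra hne
  have h2 : a.1 < 2 * k - 1 := by have := a.2; omega
  exact ha (Finset.mem_image.mpr ⟨⟨a.1, by omega⟩, Finset.mem_univ _, by apply Fin.ext; rfl⟩)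

lemma mkey (k : ℕ) (t : Fin (2*k) → Fin (2*k) → ℝ) (u v : Ik k → ℝ) :
    ∑ a : Fin (2*k), ∑ b : Fin (2*k),
      (if a.1 < b.1 then
        t a b * (u (Sum.inl a) * v (Sum.inl b) - u (Sum.inl b) * v (Sum.inl a))
      else 0)
    = ∑ j : Fin (2*k-1),
        (u (Sum.inl (e1 k j)) * shiftT k t v j - shiftT k t u j * v (Sum.inl (e1 k j))) := by
  rw [← key k _ (by
    intro a hae
    apply Finset.sum_eq_zero
    intro b _
    rw [if_neg]
    have := b.2; omega)]
  apply Finset.sum_congr rfl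
  intro j _
  rw [shiftT, shiftT, Finset.mul_sum, Finset.sum_mul, ← Finset.sum_sub_distrib]
  apply Finset.sum_congr rfl
  intro b _
  split_ifs <;> ring

/-- any Lie algebra structure as in Theorem B(1) but with the brackets of
the `x`'s additionally hitting `m` by arbitrary coefficients `t_{i,j}` is isomorphic to
the Lie algebra of Theorem B(1). -/
theorem stmt10 (k : ℕ) (hk : 1 ≤ k) (t : Fin (2 * k) → Fin (2 * k) → ℝ) :
    ∃ e : (Ik k → ℝ) ≃ₗ[ℝ] (Ik k → ℝ),
      ∀ u v : Ik k → ℝ, e (Bkt k t u v) = Bk k (e u) (e v) := by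
  refine ⟨LinearEquiv.ofLinear (phiT k t 1) (phiT k t (-1)) ?_ ?_, ?_⟩
  · apply LinearMap.ext
    intro u
    simp only [LinearMap.comp_apply, LinearMap.id_apply]
    rw [phiT_comp]
    norm_num [phiT_zero]
  · apply LinearMap.ext
    intro u
    simp only [LinearMap.comp_apply, LinearMap.id_apply]
    rw [phiT_comp]
    norm_num [phiT_zero]
  · intro u v
    show phiT k t 1 (Bkt k t u v) = Bk k (phiT k t 1 u) (phiT k t 1 v)
    funext j
    rcases j with i | j | z
    · rfl
    · rw [phiT_n]
      have hs : shiftT k t (Bkt k t u v) j = 0 := by simp [shiftT, Bkt]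
      rw [hs]
      simp [Bk, Bkt, phiT_x]
    · rw [phiT_m]
      show Bkt k t u v (Sum.inr (Sum.inr ())) = Bk k (phiT k t 1 u) (phiT k t 1 v) (Sum.inr (Sum.inr z))
      simp only [Bk, Bkt, phiT_x, phiT_n, phiT_m, one_mul]
      have expand :
          ∑ x : Fin (2*k-1),
            (u (Sum.inl (e1 k x)) * (v (Sum.inr (Sum.inl x)) + shiftT k t v x)
              - (u (Sum.inr (Sum.inl x)) + shiftT k t u x) * v (Sum.inl (e1 k x)))
          = (∑ i : Fin (2*k-1),
              (u (Sum.inl (e1 k i)) * v (Sum.inr (Sum.inl i))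
                - u (Sum.inr (Sum.inl i)) * v (Sum.inl (e1 k i))))
            + ∑ i : Fin (2*k-1),
                (u (Sum.inl (e1 k i)) * shiftT k t v i - shiftT k t u i * v (Sum.inl (e1 k i))) := by
        rw [← Finset.sum_add_distrib]
        apply Finset.sum_congr rfl
        intro i _
        ring
      rw [expand, mkey k t u v]
      ring
end

section
/- For the Lie algebra of Theorem B(2) with k ≥ 2 — basis x₁,…,x_{2k+1}, n₁,…,n_{2k-1}, m, nonzero brackets [xᵢ,x_{i+1}] = -nᵢ, [xᵢ,nᵢ] = -m (1 ≤ i ≤ 2k-1), [x_{2k},x_{2k+1}] = -m — the Jacobi identity holds, defining a nilpotent Lie algebra. -/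
/-- Index type for the basis `x₁,…,x_{2k+1}, n₁,…,n_{2k-1}, m` of the Lie algebra of
Theorem B(2); it has `4k+1` elements. -/
abbrev Jk (k : ℕ) := Fin (2 * k + 1) ⊕ Fin (2 * k - 1) ⊕ Unit

def f1 (k : ℕ) (j : Fin (2 * k - 1)) : Fin (2 * k + 1) := ⟨j.1, by have := j.2; omega⟩

def f2 (k : ℕ) (j : Fin (2 * k - 1)) : Fin (2 * k + 1) := ⟨j.1 + 1, by have := j.2; omega⟩

/-- The bracket of Theorem B(2): `[xᵢ, x_{i+1}] = -nᵢ`, `[xᵢ, nᵢ] = -m` for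
`1 ≤ i ≤ 2k-1`, and `[x_{2k}, x_{2k+1}] = -m` (0-based: indices `2k-1` and `2k`). -/
def B2 (k : ℕ) (u v : Jk k → ℝ) : Jk k → ℝ := fun j =>
  match j with
  | Sum.inl _ => 0
  | Sum.inr (Sum.inl i) =>
      -(u (Sum.inl (f1 k i)) * v (Sum.inl (f2 k i))
        - u (Sum.inl (f2 k i)) * v (Sum.inl (f1 k i)))
  | Sum.inr (Sum.inr _) =>
      -(∑ i : Fin (2 * k - 1),
          (u (Sum.inl (f1 k i)) * v (Sum.inr (Sum.inl i))
            - u (Sum.inr (Sum.inl i)) * v (Sum.inl (f1 k i))))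
      - (u (Sum.inl ⟨2 * k - 1, by omega⟩) * v (Sum.inl ⟨2 * k, by omega⟩)
          - u (Sum.inl ⟨2 * k, by omega⟩) * v (Sum.inl ⟨2 * k - 1, by omega⟩))

/-!
The bracket takes values in the span of the `nᵢ` and `m`, and bracketing `u` with a vector `z`
of that span gives `-(∑ᵢ u_{xᵢ} z_{nᵢ}) m`. Hence every double bracket `[u, [v, w]]` is the
multiple `∑ᵢ u_{xᵢ} (v_{xᵢ} w_{xᵢ₊₁} - v_{xᵢ₊₁} w_{xᵢ})` of `m`, which vanishes under cyclic
summation; and the lower central series is `⊤ ⊇ span {nᵢ, m} ⊇ ℝ m ⊇ 0`.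
-/

lemma lcs_succ_le {V : Type*} [AddCommGroup V] [Module ℝ V] {B : V → V → V} {n : ℕ}
    {S T : Submodule ℝ V} (hn : lcs B n ≤ S) (hST : ∀ u ∈ S, ∀ v, B u v ∈ T) :
    lcs B (n + 1) ≤ T :=
  Submodule.span_le.2 <| by
    rintro _ ⟨u, hu, v, rfl⟩
    exact hST u (hn hu) v

lemma mem_ker_funLeft_iff {ι κ : Type*} {f : κ → ι} {u : ι → ℝ} :
    u ∈ LinearMap.ker (LinearMap.funLeft ℝ ℝ f) ↔ ∀ j, u (f j) = 0 := by
  simp [funext_iff]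

def derivedSpace (k : ℕ) : Submodule ℝ (Jk k → ℝ) :=
  LinearMap.ker (LinearMap.funLeft ℝ ℝ Sum.inl)

def mVec (k : ℕ) : Jk k → ℝ := Pi.single (Sum.inr (Sum.inr ())) 1

lemma B2_anticomm (k : ℕ) (u v : Jk k → ℝ) : B2 k u v = -B2 k v u := by
  funext j
  rcases j with i | i | _
  · simp [B2]
  · simp only [B2, Pi.neg_apply]; ring
  · simp only [B2, Pi.neg_apply, Finset.sum_sub_distrib, mul_comm (u _) (v _)]
    ring

lemma B2_mem_derivedSpace (k : ℕ) (u v : Jk k → ℝ) : B2 k u v ∈ derivedSpace k :=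
  mem_ker_funLeft_iff.2 fun _ => rfl

lemma B2_eq_of_mem_derivedSpace (k : ℕ) (u : Jk k → ℝ) {z : Jk k → ℝ}
    (hz : z ∈ derivedSpace k) :
    B2 k u z = (-∑ i, u (Sum.inl (f1 k i)) * z (Sum.inr (Sum.inl i))) • mVec k := by
  have hz' := mem_ker_funLeft_iff.1 hz
  funext j
  rcases j with i | i | _ <;> simp [B2, mVec, hz']

lemma B2_eq_zero_of_mem_span_mVec (k : ℕ) {u : Jk k → ℝ} (hu : u ∈ ℝ ∙ mVec k)
    (v : Jk k → ℝ) : B2 k u v = 0 := by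
  obtain ⟨c, rfl⟩ := Submodule.mem_span_singleton.1 hu
  funext j
  rcases j with i | i | _ <;> simp [B2, mVec]

lemma B2_jacobi (k : ℕ) (u v w : Jk k → ℝ) :
    B2 k u (B2 k v w) + B2 k v (B2 k w u) + B2 k w (B2 k u v) = 0 := by
  simp only [B2_eq_of_mem_derivedSpace _ _ (B2_mem_derivedSpace _ _ _), ← add_smul,
    ← Finset.sum_neg_distrib, ← Finset.sum_add_distrib]
  refine (congrArg (· • mVec k) (Finset.sum_eq_zero fun i _ => ?_)).trans (zero_smul ℝ _)
  simp only [B2]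
  ring

theorem stmt11_general (k : ℕ) :
    (∀ u v : Jk k → ℝ, B2 k u v = - B2 k v u) ∧
    (∀ u v w : Jk k → ℝ,
      B2 k u (B2 k v w) + B2 k v (B2 k w u) + B2 k w (B2 k u v) = 0) ∧
    (∃ n : ℕ, lcs (B2 k) n = ⊥) := by
  refine ⟨B2_anticomm k, B2_jacobi k, 3, ?_⟩
  have h1 : lcs (B2 k) 1 ≤ derivedSpace k :=
    lcs_succ_le le_top fun u _ v => B2_mem_derivedSpace k u v
  have h2 : lcs (B2 k) 2 ≤ ℝ ∙ mVec k :=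
    lcs_succ_le h1 fun u hu v => by
      rw [B2_anticomm, B2_eq_of_mem_derivedSpace k v hu, ← neg_smul]
      exact Submodule.smul_mem _ _ (Submodule.mem_span_singleton_self _)
  have h3 : lcs (B2 k) 3 ≤ ⊥ :=
    lcs_succ_le h2 fun u hu v => (Submodule.mem_bot ℝ).2 (B2_eq_zero_of_mem_span_mVec k hu v)
  exact le_bot_iff.1 h3

/-- for `k ≥ 2` the bracket of Theorem B(2) is antisymmetric and
satisfies the Jacobi identity, defining a nilpotent Lie algebra. -/
theorem stmt11 (k : ℕ) (hk : 2 ≤ k) :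
    (∀ u v : Jk k → ℝ, B2 k u v = - B2 k v u) ∧
    (∀ u v w : Jk k → ℝ,
      B2 k u (B2 k v w) + B2 k v (B2 k w u) + B2 k w (B2 k u v) = 0) ∧
    (∃ n : ℕ, lcs (B2 k) n = ⊥) :=
  stmt11_general k
end

section
/- The Lie algebra g of Theorem B(2) is not Carnot graded, i.e. g is not isomorphic to its associated graded Lie algebra Car(g), whose only difference is that the bracket [x_{2k},x_{2k+1}] = -m is replaced by [x_{2k},x_{2k+1}] = 0. In particular no Lie algebra automorphism of the underlying vector space carries one bracket to the other. -/
/-- The bracket of the associated Carnot graded Lie algebra `Car(g)`: identical except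
that `[x_{2k}, x_{2k+1}] = 0`. -/
def B2bar (k : ℕ) (u v : Jk k → ℝ) : Jk k → ℝ := fun j =>
  match j with
  | Sum.inl _ => 0
  | Sum.inr (Sum.inl i) =>
      -(u (Sum.inl (f1 k i)) * v (Sum.inl (f2 k i))
        - u (Sum.inl (f2 k i)) * v (Sum.inl (f1 k i)))
  | Sum.inr (Sum.inr _) =>
      -(∑ i : Fin (2 * k - 1),
          (u (Sum.inl (f1 k i)) * v (Sum.inr (Sum.inl i))
            - u (Sum.inr (Sum.inl i)) * v (Sum.inl (f1 k i))))

/-!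
An isomorphism of brackets maps the centre onto the centre. The centre of `g` is the line
spanned by `m`, whereas in `Car(g)` both `x_{2k+1}` and `m` are central, so the inverse
isomorphism would send two linearly independent vectors into one line.
-/

def IsCentral {V : Type*} [Zero V] (B : V → V → V) (u : V) : Prop := ∀ v, B u v = 0

theorem IsCentral.linearEquiv_symm {R V W : Type*} [Semiring R] [AddCommMonoid V]
    [AddCommMonoid W] [Module R V] [Module R W] {B : V → V → V} {B' : W → W → W} (e : V ≃ₗ[R] W)
    (he : ∀ u v, e (B u v) = B' (e u) (e v)) {w : W} (hw : IsCentral B' w) :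
    IsCentral B (e.symm w) := by
  intro v
  apply e.injective
  rw [he, e.apply_symm_apply, hw, map_zero]

section Brackets

variable {k : ℕ}

theorem B2_single_f2_apply_n (u : Jk k → ℝ) (i : Fin (2 * k - 1)) :
    B2 k u (Pi.single (Sum.inl (f2 k i)) 1) (Sum.inr (Sum.inl i)) = -u (Sum.inl (f1 k i)) := by
  have : f1 k i ≠ f2 k i := by simp [f1, f2, Fin.ext_iff]
  simp [B2, this]

theorem B2_single_f1_apply_n (u : Jk k → ℝ) (i : Fin (2 * k - 1)) :
    B2 k u (Pi.single (Sum.inl (f1 k i)) 1) (Sum.inr (Sum.inl i)) = u (Sum.inl (f2 k i)) := by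
  have : f2 k i ≠ f1 k i := by simp [f1, f2, Fin.ext_iff]
  simp [B2, this]

theorem B2_single_f1_apply_m (u : Jk k → ℝ) (i : Fin (2 * k - 1)) :
    B2 k u (Pi.single (Sum.inl (f1 k i)) 1) (Sum.inr (Sum.inr ())) = u (Sum.inr (Sum.inl i)) := by
  have h1 : 2 * k - 1 ≠ i := by omega
  have h2 : 2 * k ≠ i := by omega
  simp [B2, Pi.single_apply, h1, h2, f1, Fin.val_inj]

theorem B2_single_penultimate_apply_m (hk : 0 < k) (u : Jk k → ℝ) :
    B2 k u (Pi.single (Sum.inl ⟨2 * k - 1, by omega⟩) 1) (Sum.inr (Sum.inr ())) =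
      u (Sum.inl ⟨2 * k, by omega⟩) := by
  have h : ∀ i : Fin (2 * k - 1), f1 k i ≠ ⟨2 * k - 1, by omega⟩ := by
    intro i; simp [f1, Fin.ext_iff]; omega
  have h' : 2 * k ≠ 2 * k - 1 := by omega
  simp [B2, h, h', Fin.ext_iff]

theorem eq_single_of_isCentral_B2 (hk : 0 < k) {u : Jk k → ℝ} (hu : IsCentral (B2 k) u) :
    u = Pi.single (Sum.inr (Sum.inr ())) (u (Sum.inr (Sum.inr ()))) := by
  have hu' : ∀ v j, B2 k u v j = 0 := fun v => congrFun (hu v)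
  funext j
  rcases j with ⟨j, hj⟩ | i | ⟨⟩
  · rcases Nat.lt_or_ge j (2 * k - 1) with hlt | hge
    · have h := (B2_single_f2_apply_n u ⟨j, hlt⟩).symm.trans (hu' _ _)
      simpa [f1] using h
    rcases Nat.lt_or_ge j (2 * k) with hlt | hge'
    · have h := (B2_single_f1_apply_n u ⟨2 * k - 2, by omega⟩).symm.trans (hu' _ _)
      simpa [f2, show 2 * k - 2 + 1 = j by omega] using h
    · have h := (B2_single_penultimate_apply_m hk u).symm.trans (hu' _ _)
      simpa [show 2 * k = j by omega] using h
  · simpa using (B2_single_f1_apply_m u i).symm.trans (hu' _ _)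
  · simp

theorem isCentral_B2bar_single {a : Jk k} (hx : ∀ i, Sum.inl (f1 k i) ≠ a)
    (hx' : ∀ i, Sum.inl (f2 k i) ≠ a) (hn : ∀ i, Sum.inr (Sum.inl i) ≠ a) :
    IsCentral (B2bar k) (Pi.single a 1) := by
  intro v
  funext j
  rcases j with _ | i | ⟨⟩
  · rfl
  · simp [B2bar, hx i, hx' i]
  · simp [B2bar, hx, hn]

end Brackets

/-- the Lie algebra `g` of Theorem B(2) is not Carnot graded: no linear
automorphism of the underlying vector space carries the bracket of `g` to the bracket of
its associated graded Lie algebra `Car(g)`. -/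
theorem stmt12 (k : ℕ) (hk : 2 ≤ k) :
    ¬ ∃ e : (Jk k → ℝ) ≃ₗ[ℝ] (Jk k → ℝ),
        ∀ u v : Jk k → ℝ, e (B2 k u v) = B2bar k (e u) (e v) := by
  rintro ⟨e, he⟩
  set m : Jk k := Sum.inr (Sum.inr ())
  -- `x` is the basis vector `x_{2k+1}`: indices in `Fin` start at `0`.
  set x : Jk k := Sum.inl ⟨2 * k, by omega⟩
  have hxm : x ≠ m := Sum.inl_ne_inr
  have hx : IsCentral (B2bar k) (Pi.single x 1) := isCentral_B2bar_single
    (fun i => by simp [x, f1, Fin.ext_iff]; omega) (fun i => by simp [x, f2, Fin.ext_iff]; omega)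
    (fun _ => Sum.inr_ne_inl)
  have hm : IsCentral (B2bar k) (Pi.single m 1) := isCentral_B2bar_single
    (fun _ => Sum.inl_ne_inr) (fun _ => Sum.inl_ne_inr) (fun _ => Sum.inr_injective.ne Sum.inl_ne_inr)
  obtain ⟨a, ha⟩ : ∃ a, e.symm (Pi.single x 1) = Pi.single m a :=
    ⟨_, eq_single_of_isCentral_B2 (by omega) (hx.linearEquiv_symm e he)⟩
  obtain ⟨b, hb⟩ : ∃ b, e.symm (Pi.single m 1) = Pi.single m b :=
    ⟨_, eq_single_of_isCentral_B2 (by omega) (hm.linearEquiv_symm e he)⟩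
  have hab : b • Pi.single x (1 : ℝ) = a • Pi.single m 1 := by
    apply e.symm.injective
    rw [map_smul, map_smul, ha, hb, ← Pi.single_smul, ← Pi.single_smul, smul_eq_mul, smul_eq_mul,
      mul_comm a]
  have hb0 : b = 0 := by simpa [hxm] using congrFun hab x
  have hm0 : (Pi.single m 1 : Jk k → ℝ) = 0 := by
    rw [← e.apply_symm_apply (Pi.single m 1), hb, hb0, Pi.single_zero, map_zero]
  simpa using congrFun hm0 m
end
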